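/- For a k-sphere S containing u, there exists a linear subspace V of R^n_u such that g_u^{-1}(K|V) = g_u^{-1}(K)|S for all compact convex sets K in R^n_u, i.e., gnomonic projection intertwines orthogonal projection onto linear subspaces of R^n_u with spherical projection onto great subspheres through u. -/

import Mathlib

/-! Both sides are built from the rays through the points `c + u`, `c ∈ C`: the inverse gnomonic
projection normalizes `c + u`, and the spherical projection projects rays and then normalizes.
Since `u ∈ V`, the orthogonal projection onto `V` maps `c + u` to `P_V c + u`, and on `u^⊥` it
agrees with the projection onto `W = V ∩ u^⊥`. -/

open scoped RealInnerProductSpace Pointwise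
open Real

noncomputable section

/-- `Esp n` is the ambient Euclidean space `ℝ^{n+1}` containing the unit sphere `S^n`. -/
abbrev Esp (n : ℕ) : Type := EuclideanSpace ℝ (Fin (n + 1))

/-- The unit sphere `S^n ⊆ ℝ^{n+1}`. -/
def uSphere (n : ℕ) : Set (Esp n) := {x | ‖x‖ = 1}

/-- `rad A = {λ • x : λ ≥ 0, x ∈ A}`. -/
def radSet {n : ℕ} (A : Set (Esp n)) : Set (Esp n) :=
  {y | ∃ l : ℝ, 0 ≤ l ∧ ∃ x ∈ A, y = l • x}

/-- A set `A ⊆ S^n` is spherically convex if `rad A` is convex. -/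
def SphConvex {n : ℕ} (A : Set (Esp n)) : Prop := Convex ℝ (radSet A)

/-- The open hemisphere centered at `u`. -/
def openHemi {n : ℕ} (u : Esp n) : Set (Esp n) := {v | ‖v‖ = 1 ∧ 0 < ⟪u, v⟫}

/-- The equator `S_u = {v ∈ S^n : u ⬝ v = 0}`. -/
def equator {n : ℕ} (u : Esp n) : Set (Esp n) := {v | ‖v‖ = 1 ∧ ⟪u, v⟫ = 0}

/-- Proper convex bodies contained in the open hemisphere centered at `u`:
the class `K_u^p(S^n)`. -/
def properBodies {n : ℕ} (u : Esp n) : Set (Set (Esp n)) :=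
  {K | K.Nonempty ∧ IsClosed K ∧ K ⊆ openHemi u ∧ SphConvex K}

/-- All proper convex bodies `K^p(S^n)`. -/
def allProperBodies (n : ℕ) : Set (Set (Esp n)) :=
  {K | ∃ u : Esp n, ‖u‖ = 1 ∧ K ∈ properBodies u}

/-- The gnomonic projection `g_u(v) = v/(u⬝v) − u`. -/
def gno {n : ℕ} (u v : Esp n) : Esp n := (⟪u, v⟫)⁻¹ • v - u

/-- The inverse gnomonic projection `x ↦ (x+u)/‖x+u‖`. -/
def gnoInv {n : ℕ} (u x : Esp n) : Esp n := ‖x + u‖⁻¹ • (x + u)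

/-- The hyperplane `ℝ^n_u = u^⊥` of `ℝ^{n+1}`. -/
def hyper {n : ℕ} (u : Esp n) : Set (Esp n) := {x | ⟪u, x⟫ = 0}

/-- The class `K(ℝ^n_u)` of (nonempty) compact convex subsets of the hyperplane `u^⊥`. -/
def cptCvx {n : ℕ} (u : Esp n) : Set (Set (Esp n)) :=
  {C | C.Nonempty ∧ IsCompact C ∧ Convex ℝ C ∧ C ⊆ hyper u}

/-- The spherical support function `h_u(K,v) = max {sgn(v⬝w) d(u, w|S_{u,v}) : w ∈ K}`,
where `d(u, w|S_{u,v}) = arccos ((u⬝w)/√((u⬝w)² + (v⬝w)²))`. -/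
def sphSupp {n : ℕ} (u : Esp n) (K : Set (Esp n)) (v : Esp n) : ℝ :=
  sSup ((fun w => Real.sign ⟪v, w⟫ *
    Real.arccos (⟪u, w⟫ / Real.sqrt (⟪u, w⟫ ^ 2 + ⟪v, w⟫ ^ 2))) '' K)

/-- The Euclidean support function `h(C,x) = sup {x ⬝ y : y ∈ C}`. -/
def esupp {n : ℕ} (C : Set (Esp n)) (x : Esp n) : ℝ :=
  sSup ((fun y => ⟪x, y⟫) '' C)

/-- Spherical (geodesic) distance on `S^n`. -/
def sphDist {n : ℕ} (x y : Esp n) : ℝ := Real.arccos ⟪x, y⟫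

/-- The Hausdorff distance `δ_s` induced by the spherical distance. -/
def sphHaus {n : ℕ} (A B : Set (Esp n)) : ℝ :=
  sInf {r | 0 ≤ r ∧ (∀ a ∈ A, ∃ b ∈ B, sphDist a b ≤ r) ∧
    (∀ b ∈ B, ∃ a ∈ A, sphDist a b ≤ r)}

/-- The metric `γ_u(K,L) = max_{v ∈ S_u} |h_u(K,v) − h_u(L,v)|`. -/
def gammaU {n : ℕ} (u : Esp n) (K L : Set (Esp n)) : ℝ :=
  sSup ((fun v => |sphSupp u K v - sphSupp u L v|) '' equator u)

/-- Spherical projection of `K` onto the great subsphere `V ∩ S^n`: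
`K|S = (rad K | V) ∩ S^n`. -/
def sphProj {n : ℕ} (V : Submodule ℝ (Esp n)) (K : Set (Esp n)) : Set (Esp n) :=
  ((fun x => (Submodule.orthogonalProjection V x : Esp n)) '' radSet K) ∩ uSphere n

/-- Orthogonal projection of a subset of `ℝ^{n+1}` onto a linear subspace `W`. -/
def eProj {n : ℕ} (W : Submodule ℝ (Esp n)) (C : Set (Esp n)) : Set (Esp n) :=
  (fun x => (Submodule.orthogonalProjection W x : Esp n)) '' C

/-- The spherical convex hull: the intersection of all spherically convex subsets of `S^n`
containing `A`. -/
def sphHull {n : ℕ} (A : Set (Esp n)) : Set (Esp n) :=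
  ⋂₀ {B | A ⊆ B ∧ B ⊆ uSphere n ∧ SphConvex B}

/-- The set `C` of pairs of proper convex bodies contained in a common open hemisphere. -/
def pairsC (n : ℕ) : Set (Set (Esp n) × Set (Esp n)) :=
  {p | ∃ u : Esp n, ‖u‖ = 1 ∧ p.1 ∈ properBodies u ∧ p.2 ∈ properBodies u}

/-- `u`-projection covariance of a binary operation on `K_u^p(S^n)`:
`(K|S) * (L|S) = (K*L)|S` for all great subspheres `S = V ∩ S^n` through `u`
with `0 ≤ k = dim S ≤ n − 1`. -/
def uProjCovariant {n : ℕ} (u : Esp n)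
    (op : Set (Esp n) → Set (Esp n) → Set (Esp n)) : Prop :=
  ∀ V : Submodule ℝ (Esp n), u ∈ V → Module.finrank ℝ V ≤ n →
    ∀ K ∈ properBodies u, ∀ L ∈ properBodies u,
      op (sphProj V K) (sphProj V L) = sphProj V (op K L)

/-- Projection covariance: `u`-projection covariance for every `u ∈ S^n`. -/
def projCovariantC {n : ℕ} (op : Set (Esp n) → Set (Esp n) → Set (Esp n)) : Prop :=
  ∀ u : Esp n, ‖u‖ = 1 → uProjCovariant u op

/-- Projection covariance for operations on compact convex subsets of `u^⊥`. -/
def eProjCovariant {n : ℕ} (u : Esp n)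
    (op : Set (Esp n) → Set (Esp n) → Set (Esp n)) : Prop :=
  ∀ W : Submodule ℝ (Esp n), (W : Set (Esp n)) ⊆ hyper u →
    ∀ K ∈ cptCvx u, ∀ L ∈ cptCvx u,
      op (eProj W K) (eProj W L) = eProj W (op K L)


section Projection

variable {E : Type*} [NormedAddCommGroup E] [InnerProductSpace ℝ E]

theorem inner_starProjection_of_mem {V : Submodule ℝ E} [V.HasOrthogonalProjection] {u : E}
    (huV : u ∈ V) (x : E) : ⟪u, V.starProjection x⟫ = ⟪u, x⟫ := by
  rw [← Submodule.inner_starProjection_left_eq_right, Submodule.starProjection_eq_self_iff.mpr huV]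

theorem starProjection_inf_orthogonal_singleton [FiniteDimensional ℝ E] {V : Submodule ℝ E}
    {u x : E} (huV : u ∈ V) (hx : ⟪u, x⟫ = 0) :
    (V ⊓ (ℝ ∙ u)ᗮ).starProjection x = V.starProjection x := by
  refine Submodule.eq_starProjection_of_mem_of_inner_eq_zero ?_ ?_
  · refine ⟨V.starProjection_apply_mem x, Submodule.mem_orthogonal_singleton_iff_inner_right.mpr ?_⟩
    rw [inner_starProjection_of_mem huV, hx]
  · intro w hw
    rw [real_inner_comm]
    exact V.sub_starProjection_mem_orthogonal x w hw.1

theorem add_ne_zero_of_inner_eq_zero {u x : E} (hu : u ≠ 0) (hx : ⟪u, x⟫ = 0) : x + u ≠ 0 := by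
  intro h
  have : ⟪u, x + u⟫ = 0 := by rw [h, inner_zero_right]
  rw [inner_add_right, hx, zero_add, real_inner_self_eq_norm_sq] at this
  exact hu (norm_eq_zero.mp (pow_eq_zero_iff two_ne_zero |>.mp this))

end Projection

section Rays

variable {n m : ℕ}

theorem image_radSet (f : Esp n →ₗ[ℝ] Esp m) (B : Set (Esp n)) :
    f '' radSet B = radSet (f '' B) := by
  ext y
  constructor
  · rintro ⟨_, ⟨l, hl, b, hb, rfl⟩, rfl⟩
    exact ⟨l, hl, f b, ⟨b, hb, rfl⟩, map_smul f l b⟩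
  · rintro ⟨l, hl, _, ⟨b, hb, rfl⟩, rfl⟩
    exact ⟨l • b, ⟨l, hl, b, hb, rfl⟩, map_smul f l b⟩

theorem radSet_image_inv_norm_smul {B : Set (Esp n)} (hB : ∀ b ∈ B, b ≠ 0) :
    radSet ((fun b => ‖b‖⁻¹ • b) '' B) = radSet B := by
  ext y
  constructor
  · rintro ⟨l, hl, _, ⟨b, hb, rfl⟩, rfl⟩
    exact ⟨l * ‖b‖⁻¹, by positivity, b, hb, smul_smul l _ b⟩
  · rintro ⟨l, hl, b, hb, rfl⟩
    refine ⟨l * ‖b‖, by positivity, _, ⟨b, hb, rfl⟩, ?_⟩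
    rw [smul_smul, mul_assoc, mul_inv_cancel₀ (norm_ne_zero_iff.mpr (hB b hb)), mul_one]

theorem radSet_inter_uSphere {B : Set (Esp n)} (hB : ∀ b ∈ B, b ≠ 0) :
    radSet B ∩ uSphere n = (fun b => ‖b‖⁻¹ • b) '' B := by
  ext y
  constructor
  · rintro ⟨⟨l, hl, b, hb, rfl⟩, hy⟩
    have hy : l * ‖b‖ = 1 := by
      change ‖l • b‖ = 1 at hy
      rwa [norm_smul, Real.norm_of_nonneg hl] at hy
    exact ⟨b, hb, by rw [eq_inv_of_mul_eq_one_left hy]⟩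
  · rintro ⟨b, hb, rfl⟩
    have hb0 : ‖b‖ ≠ 0 := norm_ne_zero_iff.mpr (hB b hb)
    refine ⟨⟨‖b‖⁻¹, by positivity, b, hb, rfl⟩, ?_⟩
    change ‖‖b‖⁻¹ • b‖ = 1
    rw [norm_smul, norm_inv, norm_norm, inv_mul_cancel₀ hb0]

end Rays

theorem image_gnoInv {n : ℕ} (u : Esp n) (C : Set (Esp n)) :
    gnoInv u '' C = (fun b => ‖b‖⁻¹ • b) '' ((· + u) '' C) := by
  rw [Set.image_image]
  rfl

theorem sphProj_image_gnoInv {n : ℕ} {u : Esp n} (hu : u ≠ 0) {V : Submodule ℝ (Esp n)}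
    (huV : u ∈ V) {C : Set (Esp n)} (hC : C ⊆ hyper u) :
    sphProj V (gnoInv u '' C) = gnoInv u '' eProj V C := by
  have hproj : V.starProjection '' ((· + u) '' C) = (· + u) '' eProj V C := by
    simp only [Set.image_image, eProj, map_add, Submodule.starProjection_eq_self_iff.mpr huV]
    rfl
  have hne : ∀ b ∈ (· + u) '' C, b ≠ 0 := by
    rintro _ ⟨c, hc, rfl⟩
    exact add_ne_zero_of_inner_eq_zero hu (hC hc)
  have hne' : ∀ b ∈ (· + u) '' eProj V C, b ≠ 0 := by
    rintro _ ⟨_, ⟨c, hc, rfl⟩, rfl⟩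
    exact add_ne_zero_of_inner_eq_zero hu ((inner_starProjection_of_mem huV c).trans (hC hc))
  calc sphProj V (gnoInv u '' C)
      = V.starProjection.toLinearMap '' radSet ((· + u) '' C) ∩ uSphere n := by
        rw [sphProj, image_gnoInv, radSet_image_inv_norm_smul hne]
        rfl
    _ = gnoInv u '' eProj V C := by
        rw [image_radSet, ContinuousLinearMap.coe_coe, hproj, radSet_inter_uSphere hne',
          image_gnoInv]

theorem stmt10_general {n : ℕ} (u : Esp n) (hu : ‖u‖ = 1)
    (V : Submodule ℝ (Esp n)) (huV : u ∈ V) :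
    ∃ W : Submodule ℝ (Esp n), (W : Set (Esp n)) ⊆ hyper u ∧
      ∀ C ∈ cptCvx u, gnoInv u '' eProj W C = sphProj V (gnoInv u '' C) := by
  have hu0 : u ≠ 0 := norm_ne_zero_iff.mp (hu ▸ one_ne_zero)
  refine ⟨V ⊓ (ℝ ∙ u)ᗮ, fun x hx => Submodule.mem_orthogonal_singleton_iff_inner_right.mp hx.2, ?_⟩
  rintro C ⟨-, -, -, hC⟩
  have hW : eProj (V ⊓ (ℝ ∙ u)ᗮ) C = eProj V C :=
    Set.image_congr fun c hc => starProjection_inf_orthogonal_singleton huV (hC hc)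
  rw [hW, sphProj_image_gnoInv hu0 huV hC]

/-- For every `k`-sphere `S = V ∩ S^n` through `u` there is a linear
subspace `W` of `ℝ^n_u = u^⊥` such that `g_u^{-1}(K|W) = g_u^{-1}(K)|S` for all compact
convex sets `K ⊆ u^⊥`. -/
theorem stmt10 {n : ℕ} (hn : 2 ≤ n) (u : Esp n) (hu : ‖u‖ = 1) (k : ℕ) (hk : k ≤ n - 1)
    (V : Submodule ℝ (Esp n)) (hV : Module.finrank ℝ V = k + 1) (huV : u ∈ V) :
    ∃ W : Submodule ℝ (Esp n), (W : Set (Esp n)) ⊆ hyper u ∧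
      ∀ C ∈ cptCvx u, gnoInv u '' eProj W C = sphProj V (gnoInv u '' C) :=
  stmt10_general u hu V huV
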